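/- arXiv:2402.08612 — 3 statements merged into one kernel-verified Lean document; each statement's English description precedes it below -/
import Mathlib

section
/- Let δ > 0 and let q₁, q₂, q₃ be positive integers. Let A ⊆ SL₂(ℤ/q₁ℤ)×SL₂(ℤ/q₂ℤ)×SL₂(ℤ/q₃ℤ) with |A| > (q₁q₂q₃)^{3−δ}. Then |A·A⁻¹ ∩ (U₁×U₂×U₃)| ≥ (q₁q₂q₃)^{1−δ}, where Uᵢ is the subgroup of upper unitriangular matrices {(1, m; 0, 1) : m ∈ ℤ/qᵢℤ} of SL₂(ℤ/qᵢℤ) and A·A⁻¹ = {ab⁻¹ : a, b ∈ A}. -/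
open Matrix Pointwise

def upperUni (q : ℕ) : Set (Matrix.SpecialLinearGroup (Fin 2) (ZMod q)) :=
  {g | (g : Matrix (Fin 2) (Fin 2) (ZMod q)) 0 0 = 1 ∧
       (g : Matrix (Fin 2) (Fin 2) (ZMod q)) 1 0 = 0 ∧
       (g : Matrix (Fin 2) (Fin 2) (ZMod q)) 1 1 = 1}

lemma mem_upperUni_mul_inv {q : ℕ} (a b : Matrix.SpecialLinearGroup (Fin 2) (ZMod q))
    (h10 : (a : Matrix (Fin 2) (Fin 2) (ZMod q)) 1 0 = (b : Matrix (Fin 2) (Fin 2) (ZMod q)) 1 0)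
    (h11 : (a : Matrix (Fin 2) (Fin 2) (ZMod q)) 1 1 = (b : Matrix (Fin 2) (Fin 2) (ZMod q)) 1 1) :
    a * b⁻¹ ∈ upperUni q := by
  have hdetb : ((b : Matrix (Fin 2) (Fin 2) (ZMod q))).det = 1 := b.2
  rw [Matrix.det_fin_two] at hdetb
  have hM : ((a * b⁻¹ : Matrix.SpecialLinearGroup (Fin 2) (ZMod q)) : Matrix (Fin 2) (Fin 2) (ZMod q))
      = (a : Matrix (Fin 2) (Fin 2) (ZMod q)) * adjugate (b : Matrix (Fin 2) (Fin 2) (ZMod q)) := by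
    simp [Matrix.SpecialLinearGroup.coe_inv]
  have e10 : ((a * b⁻¹ : Matrix.SpecialLinearGroup (Fin 2) (ZMod q)) : Matrix (Fin 2) (Fin 2) (ZMod q)) 1 0 = 0 := by
    rw [hM, Matrix.adjugate_fin_two]
    simp [Matrix.mul_apply, Fin.sum_univ_two]
    rw [h10, h11]; ring
  have e11 : ((a * b⁻¹ : Matrix.SpecialLinearGroup (Fin 2) (ZMod q)) : Matrix (Fin 2) (Fin 2) (ZMod q)) 1 1 = 1 := by
    rw [hM, Matrix.adjugate_fin_two]
    simp [Matrix.mul_apply, Fin.sum_univ_two]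
    rw [h10, h11]; linear_combination hdetb
  have hdet : ((a * b⁻¹ : Matrix.SpecialLinearGroup (Fin 2) (ZMod q)) : Matrix (Fin 2) (Fin 2) (ZMod q)).det = 1 :=
    (a * b⁻¹).2
  rw [Matrix.det_fin_two, e10, e11] at hdet
  refine ⟨?_, e10, e11⟩
  simpa using hdet

/-- A large subset of `SL₂(ℤ/q₁ℤ)×SL₂(ℤ/q₂ℤ)×SL₂(ℤ/q₃ℤ)` has many
products `a·b⁻¹` inside the product of upper unitriangular subgroups. -/
theorem statement5 (δ : ℝ) (hδ0 : 0 < δ)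
    (q₁ q₂ q₃ : ℕ) (hq₁ : 0 < q₁) (hq₂ : 0 < q₂) (hq₃ : 0 < q₃)
    (A : Set (Matrix.SpecialLinearGroup (Fin 2) (ZMod q₁) ×
      Matrix.SpecialLinearGroup (Fin 2) (ZMod q₂) ×
      Matrix.SpecialLinearGroup (Fin 2) (ZMod q₃)))
    (hlarge : ((q₁ * q₂ * q₃ : ℕ) : ℝ) ^ ((3 : ℝ) - δ) < (A.ncard : ℝ)) :
    ((q₁ * q₂ * q₃ : ℕ) : ℝ) ^ ((1 : ℝ) - δ) ≤
      (((A * A⁻¹) ∩ (upperUni q₁ ×ˢ (upperUni q₂ ×ˢ upperUni q₃))).ncard : ℝ) := by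
  classical
  haveI : NeZero q₁ := ⟨hq₁.ne'⟩
  haveI : NeZero q₂ := ⟨hq₂.ne'⟩
  haveI : NeZero q₃ := ⟨hq₃.ne'⟩
  set Q : ℝ := ((q₁ * q₂ * q₃ : ℕ) : ℝ) with hQdef
  have hQpos : 0 < Q := by
    have h : 0 < q₁ * q₂ * q₃ := by positivity
    rw [hQdef]; exact_mod_cast h
  have hAfin : A.Finite := Set.toFinite A
  set s : Finset (Matrix.SpecialLinearGroup (Fin 2) (ZMod q₁) ×
      Matrix.SpecialLinearGroup (Fin 2) (ZMod q₂) ×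
      Matrix.SpecialLinearGroup (Fin 2) (ZMod q₃)) := hAfin.toFinset with hs
  let ψ : (Matrix.SpecialLinearGroup (Fin 2) (ZMod q₁) ×
      Matrix.SpecialLinearGroup (Fin 2) (ZMod q₂) ×
      Matrix.SpecialLinearGroup (Fin 2) (ZMod q₃)) →
      ((ZMod q₁ × ZMod q₁) × (ZMod q₂ × ZMod q₂) × (ZMod q₃ × ZMod q₃)) :=
    fun g => (((g.1 : Matrix (Fin 2) (Fin 2) (ZMod q₁)) 1 0, (g.1 : Matrix (Fin 2) (Fin 2) (ZMod q₁)) 1 1),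
      ((g.2.1 : Matrix (Fin 2) (Fin 2) (ZMod q₂)) 1 0, (g.2.1 : Matrix (Fin 2) (Fin 2) (ZMod q₂)) 1 1),
      ((g.2.2 : Matrix (Fin 2) (Fin 2) (ZMod q₃)) 1 0, (g.2.2 : Matrix (Fin 2) (Fin 2) (ZMod q₃)) 1 1))
  have hucard : ((Finset.univ : Finset ((ZMod q₁ × ZMod q₁) × (ZMod q₂ × ZMod q₂) × (ZMod q₃ × ZMod q₃))).card : ℝ)
      = Q ^ 2 := by
    simp only [Finset.card_univ, Fintype.card_prod, ZMod.card, hQdef]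
    push_cast; ring
  have hsumn : s.card = ∑ y ∈ (Finset.univ : Finset ((ZMod q₁ × ZMod q₁) × (ZMod q₂ × ZMod q₂) × (ZMod q₃ × ZMod q₃))),
      (s.filter fun x => ψ x = y).card :=
    Finset.card_eq_sum_card_fiberwise (fun x _ => Finset.mem_univ (ψ x))
  have hsum : (s.card : ℝ) = ∑ y ∈ (Finset.univ : Finset ((ZMod q₁ × ZMod q₁) × (ZMod q₂ × ZMod q₂) × (ZMod q₃ × ZMod q₃))),
      ((s.filter fun x => ψ x = y).card : ℝ) := by
    rw [hsumn]; push_cast; rfl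
  obtain ⟨y, -, hy⟩ := Finset.exists_le_of_sum_le (Finset.univ_nonempty)
    (f := fun _ => (s.card : ℝ) / Q ^ 2)
    (g := fun y => ((s.filter fun x => ψ x = y).card : ℝ))
    (by
      rw [Finset.sum_const, nsmul_eq_mul, hucard, ← hsum, mul_div_cancel₀]
      positivity)
  set F := s.filter (fun x => ψ x = y) with hF
  have hscard : (s.card : ℝ) = A.ncard := by
    rw [Set.ncard_eq_toFinset_card A hAfin]
  have hQlt : Q ^ ((1:ℝ) - δ) < (F.card : ℝ) := by
    have h1 : Q ^ ((3:ℝ) - δ) = Q ^ ((1:ℝ) - δ) * Q ^ 2 := by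
      rw [← Real.rpow_natCast Q 2, ← Real.rpow_add hQpos]
      norm_num
      congr 1
      ring
    have h2 : Q ^ ((1:ℝ) - δ) < (s.card : ℝ) / Q ^ 2 := by
      rw [lt_div_iff₀ (by positivity), ← h1, hscard]
      exact hlarge
    exact h2.trans_le hy
  have hFne : F.Nonempty := by
    rw [← Finset.card_pos, ← Nat.cast_pos (α := ℝ)]
    exact lt_of_le_of_lt (Real.rpow_nonneg hQpos.le _) hQlt
  obtain ⟨b₀, hb₀⟩ := hFne
  -- facts about members of F
  have hFmem : ∀ a ∈ F, a ∈ A ∧ ψ a = y := by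
    intro a ha
    rw [hF, Finset.mem_filter] at ha
    exact ⟨(Set.Finite.mem_toFinset hAfin).mp ha.1, ha.2⟩
  have himg : ((fun a => a * b₀⁻¹) '' (F : Set _)) ⊆
      ((A * A⁻¹) ∩ (upperUni q₁ ×ˢ (upperUni q₂ ×ˢ upperUni q₃))) := by
    rintro _ ⟨a, ha, rfl⟩
    obtain ⟨haA, haψ⟩ := hFmem a (by exact_mod_cast ha)
    obtain ⟨hbA, hbψ⟩ := hFmem b₀ hb₀
    have hψ : ψ a = ψ b₀ := haψ.trans hbψ.symm
    simp only [ψ, Prod.mk.injEq] at hψ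
    refine ⟨Set.mul_mem_mul haA (Set.inv_mem_inv.mpr hbA), ?_, ?_, ?_⟩
    · exact mem_upperUni_mul_inv a.1 b₀.1 hψ.1.1 hψ.1.2
    · exact mem_upperUni_mul_inv a.2.1 b₀.2.1 hψ.2.1.1 hψ.2.1.2
    · exact mem_upperUni_mul_inv a.2.2 b₀.2.2 hψ.2.2.1 hψ.2.2.2
  have hinj : Function.Injective (fun a : (Matrix.SpecialLinearGroup (Fin 2) (ZMod q₁) ×
      Matrix.SpecialLinearGroup (Fin 2) (ZMod q₂) ×
      Matrix.SpecialLinearGroup (Fin 2) (ZMod q₃)) => a * b₀⁻¹) :=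
    fun u v h => by simpa using mul_right_cancel h
  have hcard : (F.card : ℕ) ≤ ((A * A⁻¹) ∩ (upperUni q₁ ×ˢ (upperUni q₂ ×ˢ upperUni q₃))).ncard := by
    have h1 := Set.ncard_le_ncard himg (Set.toFinite _)
    rwa [Set.ncard_image_of_injective _ hinj, Set.ncard_coe_finset] at h1
  exact hQlt.le.trans (by exact_mod_cast hcard)
end

section
/- Let G₁ and G₂ be finite groups and ψ: G₁ → G₂ any map. Then for every ε with 0 < ε < 1/1600, either |{(x,y) ∈ G₁ × G₁ : ψ(xy) = ψ(x)ψ(y)}| < (1−ε)|G₁|², or there exist a subset S ⊆ G₁ with |S| > (1−√ε)|G₁| and a group homomorphism f: G₁ → G₂ such that f(x) = ψ(x) for every x ∈ S. -/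
open Finset


private lemma statement14_aux (s N Tc B : ℝ) (hs0 : 0 < s) (hs40 : s < 1 / 40)
    (hN : 1 ≤ N) (hTc0 : 0 ≤ Tc) (hB0 : 0 ≤ B) (hB : B ≤ s ^ 2 * N ^ 2)
    (hT : Tc * (N ^ 2 - 2 * B) ≤ N * B) : Tc < s * N := by
  have hN0 : (0 : ℝ) < N := lt_of_lt_of_le one_pos hN
  have hN3 : (0 : ℝ) < N ^ 3 := by positivity
  have hs2small : s ^ 2 < 1 / 1600 := by nlinarith
  have step1 : Tc * (N ^ 2 * (1 - 2 * s ^ 2)) ≤ s ^ 2 * N ^ 3 := by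
    calc Tc * (N ^ 2 * (1 - 2 * s ^ 2)) = Tc * (N ^ 2 - 2 * (s ^ 2 * N ^ 2)) := by ring
      _ ≤ Tc * (N ^ 2 - 2 * B) := mul_le_mul_of_nonneg_left (by linarith) hTc0
      _ ≤ N * B := hT
      _ ≤ N * (s ^ 2 * N ^ 2) := mul_le_mul_of_nonneg_left hB hN0.le
      _ = s ^ 2 * N ^ 3 := by ring
  by_contra hcon
  push_neg at hcon
  have hfac : (0 : ℝ) < N ^ 2 * (1 - 2 * s ^ 2) := by nlinarith
  have h1 : s * N * (N ^ 2 * (1 - 2 * s ^ 2)) ≤ Tc * (N ^ 2 * (1 - 2 * s ^ 2)) :=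
    mul_le_mul_of_nonneg_right hcon hfac.le
  have hpos : (0 : ℝ) < s * N ^ 3 * (1 - 2 * s ^ 2 - s) := by
    apply mul_pos (mul_pos hs0 hN3)
    nlinarith
  nlinarith [h1, step1, hpos]

/-- An approximate homomorphism between finite groups either fails the
homomorphism equation on a positive proportion of pairs, or agrees with a genuine
homomorphism on almost all of the group. -/
theorem statement14 (G₁ G₂ : Type*) [Group G₁] [Group G₂] [Finite G₁] [Finite G₂]
    (ψ : G₁ → G₂) (ε : ℝ) (hε0 : 0 < ε) (hε : ε < 1 / 1600) :
    (({p : G₁ × G₁ | ψ (p.1 * p.2) = ψ p.1 * ψ p.2}.ncard : ℝ) <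
        (1 - ε) * (Nat.card G₁ : ℝ) ^ 2) ∨
      ∃ S : Set G₁, (1 - Real.sqrt ε) * (Nat.card G₁ : ℝ) < (S.ncard : ℝ) ∧
        ∃ f : G₁ →* G₂, ∀ x ∈ S, f x = ψ x := by
  classical
  cases nonempty_fintype G₁
  rw [or_iff_not_imp_left]
  intro hgood
  push_neg at hgood
  set n := Nat.card G₁ with hn
  have hnF : Fintype.card G₁ = n := Nat.card_eq_fintype_card.symm
  have hn1 : 1 ≤ n := Nat.card_pos
  -- bad pairs
  set Bad : Finset (G₁ × G₁) := univ.filter (fun p => ψ (p.1 * p.2) ≠ ψ p.1 * ψ p.2)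
    with hBadDef
  set nB := Bad.card with hnB
  have hsplit : (univ.filter (fun p : G₁ × G₁ => ψ (p.1 * p.2) = ψ p.1 * ψ p.2)).card + nB
      = n ^ 2 := by
    rw [hnB, hBadDef, Finset.card_filter_add_card_filter_not, card_univ]
    simp [Fintype.card_prod, hnF, sq]
  have hncard : ({p : G₁ × G₁ | ψ (p.1 * p.2) = ψ p.1 * ψ p.2}.ncard : ℝ)
      = ((univ.filter (fun p : G₁ × G₁ => ψ (p.1 * p.2) = ψ p.1 * ψ p.2)).card : ℝ) := by
    congr 1
    rw [show {p : G₁ × G₁ | ψ (p.1 * p.2) = ψ p.1 * ψ p.2}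
        = ↑(univ.filter (fun p : G₁ × G₁ => ψ (p.1 * p.2) = ψ p.1 * ψ p.2)) by ext p; simp]
    exact Set.ncard_coe_finset _
  have hBbound : (nB : ℝ) ≤ ε * (n : ℝ) ^ 2 := by
    rw [hncard] at hgood
    have h2 : ((univ.filter (fun p : G₁ × G₁ => ψ (p.1 * p.2) = ψ p.1 * ψ p.2)).card : ℝ)
        + (nB : ℝ) = ((n : ℝ)) ^ 2 := by exact_mod_cast congrArg (Nat.cast (R := ℝ)) hsplit
    nlinarith [hgood]
  -- local difference function
  set h : G₁ → G₁ → G₂ := fun x y => ψ (x * y) * (ψ y)⁻¹ with hh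
  -- shifting preserves filter cardinality
  have hshift : ∀ (a : G₁) (p : G₁ → Prop) [DecidablePred p],
      (univ.filter fun w => p (a * w)).card = (univ.filter p).card := by
    intro a p _
    apply Finset.card_equiv (Equiv.mulLeft a)
    intro w
    simp [Equiv.mulLeft]
  -- key: each x has a popular difference value
  have key : ∀ x : G₁, ∃ z : G₂,
      n * (univ.filter fun w => h x w ≠ z).card ≤ 2 * nB := by
    intro x
    set D : Finset (G₁ × G₁) := univ.filter (fun p => h x (p.1 * p.2) ≠ h x p.1) with hD
    have hDcard : D.card ≤ 2 * nB := by
      have hsub : D ⊆ (univ.filter fun p : G₁ × G₁ =>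
            ψ ((x * p.1) * p.2) ≠ ψ (x * p.1) * ψ p.2) ∪ Bad := by
        intro p hp
        simp only [hD, mem_filter, mem_univ, true_and] at hp
        by_contra hcon
        simp only [mem_union, mem_filter, mem_univ, true_and, hBadDef, not_or, not_not] at hcon
        obtain ⟨h1, h2⟩ := hcon
        apply hp
        simp only [hh]
        rw [show x * (p.1 * p.2) = (x * p.1) * p.2 by group, h1, h2]
        group
      have hE1 : (univ.filter fun p : G₁ × G₁ =>
          ψ ((x * p.1) * p.2) ≠ ψ (x * p.1) * ψ p.2).card = nB := by
        rw [hnB, hBadDef]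
        apply Finset.card_equiv ((Equiv.mulLeft x).prodCongr (Equiv.refl G₁))
        intro p
        simp [Equiv.mulLeft]
      calc D.card ≤ _ := Finset.card_le_card hsub
        _ ≤ _ + _ := Finset.card_union_le _ _
        _ ≤ 2 * nB := by omega
    set Q : Finset (G₁ × G₁) := univ.filter (fun p => h x p.2 ≠ h x p.1) with hQdef
    have hQ : Q.card = D.card := by
      symm
      apply Finset.card_equiv (Equiv.prodShear (Equiv.refl G₁) (fun y => Equiv.mulLeft y))
      intro p
      simp [hD, hQdef, Equiv.prodShear, Equiv.mulLeft]
    set c : G₁ → ℕ := fun y => (univ.filter fun w => h x w ≠ h x y).card with hc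
    have hfib : ∑ y : G₁, c y = Q.card := by
      rw [Finset.card_eq_sum_card_fiberwise (f := Prod.fst) (s := Q) (t := univ)
        (fun p _ => mem_univ _)]
      apply Finset.sum_congr rfl
      intro y _
      have : Q.filter (fun p => p.1 = y) = {y} ×ˢ (univ.filter fun w => h x w ≠ h x y) := by
        ext p
        simp only [hQdef, mem_filter, mem_univ, true_and, Finset.mem_product,
          Finset.mem_singleton, Finset.filter_filter]
        constructor
        · rintro ⟨h1, rfl⟩; exact ⟨rfl, h1⟩
        · rintro ⟨rfl, h1⟩; exact ⟨h1, rfl⟩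
      rw [this, Finset.card_product]
      simp [hc]
    obtain ⟨y₀, -, hy₀⟩ := Finset.exists_min_image univ c ⟨1, mem_univ 1⟩
    refine ⟨h x y₀, ?_⟩
    have hmin : n * c y₀ ≤ ∑ y : G₁, c y := by
      have := Finset.card_nsmul_le_sum univ c (c y₀) (fun y _ => hy₀ y (mem_univ y))
      simpa [card_univ, hnF, smul_eq_mul] using this
    calc n * c y₀ ≤ ∑ y : G₁, c y := hmin
      _ = Q.card := hfib
      _ = D.card := hQ
      _ ≤ 2 * nB := hDcard
  choose f hf using key
  have hNcast : (1 : ℝ) ≤ (n : ℝ) := by exact_mod_cast hn1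
  have h6lt : 6 * nB < n ^ 2 := by
    have : (6 * nB : ℝ) < ((n : ℝ)) ^ 2 := by nlinarith [hBbound]
    exact_mod_cast this
  -- f is multiplicative
  have hmul : ∀ x₁ x₂ : G₁, f (x₁ * x₂) = f x₁ * f x₂ := by
    intro x₁ x₂
    set W : Finset G₁ := ((univ.filter fun w => h (x₁ * x₂) w ≠ f (x₁ * x₂)) ∪
        (univ.filter fun w => h x₂ w ≠ f x₂)) ∪
        (univ.filter fun w => h x₁ (x₂ * w) ≠ f x₁) with hW
    have hW3 : (univ.filter fun w => h x₁ (x₂ * w) ≠ f x₁).card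
        = (univ.filter fun w => h x₁ w ≠ f x₁).card := hshift x₂ (fun w => h x₁ w ≠ f x₁)
    have hWcard : n * W.card ≤ 6 * nB := by
      have hle : W.card ≤ (univ.filter fun w => h (x₁ * x₂) w ≠ f (x₁ * x₂)).card +
          (univ.filter fun w => h x₂ w ≠ f x₂).card +
          (univ.filter fun w => h x₁ w ≠ f x₁).card := by
        rw [← hW3]
        calc W.card ≤ _ + _ := Finset.card_union_le _ _
          _ ≤ _ := by
            have := Finset.card_union_le (univ.filter fun w => h (x₁ * x₂) w ≠ f (x₁ * x₂))
              (univ.filter fun w => h x₂ w ≠ f x₂)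
            omega
      have := hf (x₁ * x₂)
      have := hf x₂
      have := hf x₁
      calc n * W.card ≤ n * ((univ.filter fun w => h (x₁ * x₂) w ≠ f (x₁ * x₂)).card +
            (univ.filter fun w => h x₂ w ≠ f x₂).card +
            (univ.filter fun w => h x₁ w ≠ f x₁).card) := Nat.mul_le_mul_left n hle
        _ = n * (univ.filter fun w => h (x₁ * x₂) w ≠ f (x₁ * x₂)).card +
            n * (univ.filter fun w => h x₂ w ≠ f x₂).card +
            n * (univ.filter fun w => h x₁ w ≠ f x₁).card := by ring
        _ ≤ 6 * nB := by omega
    have hWlt : W.card < n := by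
      by_contra hcon
      push_neg at hcon
      have : n * n ≤ n * W.card := Nat.mul_le_mul_left n hcon
      have hnn : n ^ 2 = n * n := sq n
      omega
    obtain ⟨w, hw⟩ : ∃ w, w ∉ W := by
      by_contra hcon
      push_neg at hcon
      have : W = univ := Finset.eq_univ_iff_forall.mpr hcon
      rw [this, card_univ, hnF] at hWlt
      omega
    simp only [hW, mem_union, mem_filter, mem_univ, true_and, not_or, not_not] at hw
    obtain ⟨⟨h1, h2⟩, h3⟩ := hw
    rw [← h1, ← h2, ← h3]
    simp only [hh]
    rw [show x₁ * (x₂ * w) = x₁ * x₂ * w by group]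
    group
  -- the exceptional set
  set T : Finset G₁ := univ.filter (fun x => f x ≠ ψ x) with hT
  set g : G₁ → ℕ := fun x => (univ.filter fun y => ψ (x * y) = ψ x * ψ y).card with hg
  set b : G₁ → ℕ := fun x => (univ.filter fun y => ψ (x * y) ≠ ψ x * ψ y).card with hb
  have hgb : ∀ x : G₁, g x + b x = n := by
    intro x
    rw [hg, hb, Finset.card_filter_add_card_filter_not, card_univ, hnF]
  have hrow : ∀ x ∈ T, n * g x ≤ 2 * nB := by
    intro x hx
    simp only [hT, mem_filter, mem_univ, true_and] at hx
    have hsub : (univ.filter fun y => ψ (x * y) = ψ x * ψ y)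
        ⊆ (univ.filter fun w => h x w ≠ f x) := by
      intro y hy
      simp only [mem_filter, mem_univ, true_and] at hy ⊢
      have hxy : h x y = ψ x := by simp only [hh]; rw [hy]; group
      rw [hxy]
      exact fun hcon => hx hcon.symm
    exact le_trans (Nat.mul_le_mul_left n (Finset.card_le_card hsub)) (hf x)
  have hsumb : ∑ x ∈ T, b x ≤ nB := by
    rw [hnB, Finset.card_eq_sum_card_fiberwise (f := Prod.fst) (s := Bad) (t := univ)
      (fun p _ => mem_univ _)]
    have heach : ∀ x : G₁, (Bad.filter fun p => p.1 = x).card = b x := by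
      intro x
      have : Bad.filter (fun p => p.1 = x) = {x} ×ˢ (univ.filter fun y =>
          ψ (x * y) ≠ ψ x * ψ y) := by
        ext p
        simp only [hBadDef, mem_filter, mem_univ, true_and, Finset.mem_product,
          Finset.mem_singleton, Finset.filter_filter]
        constructor
        · rintro ⟨h1, rfl⟩; exact ⟨rfl, h1⟩
        · rintro ⟨rfl, h1⟩; exact ⟨h1, rfl⟩
      rw [this, Finset.card_product]
      simp [hb]
    calc ∑ x ∈ T, b x ≤ ∑ x : G₁, b x :=
          Finset.sum_le_sum_of_subset (Finset.subset_univ T)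
      _ = ∑ x : G₁, (Bad.filter fun p => p.1 = x).card := by
          exact Finset.sum_congr rfl (fun x _ => (heach x).symm)
  have hTbound : T.card * (n ^ 2 - 2 * nB) ≤ n * nB := by
    have hper : ∀ x ∈ T, n ^ 2 - 2 * nB ≤ n * b x := by
      intro x hx
      have h1 := hrow x hx
      have h2 := hgb x
      have h3 : n * g x + n * b x = n * n := by rw [← Nat.mul_add, h2]
      have hnn : n ^ 2 = n * n := sq n
      omega
    calc T.card * (n ^ 2 - 2 * nB) ≤ ∑ x ∈ T, n * b x := by
          have := Finset.card_nsmul_le_sum T (fun x => n * b x) (n ^ 2 - 2 * nB) hper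
          simpa [smul_eq_mul] using this
      _ = n * ∑ x ∈ T, b x := by rw [Finset.mul_sum]
      _ ≤ n * nB := Nat.mul_le_mul_left n hsumb
  -- real arithmetic
  have hs2 : Real.sqrt ε ^ 2 = ε := Real.sq_sqrt hε0.le
  have hs0 : 0 < Real.sqrt ε := Real.sqrt_pos.mpr hε0
  have hs40 : Real.sqrt ε < 1 / 40 := by
    rw [show (1 / 40 : ℝ) = Real.sqrt (1 / 1600) by
      rw [show (1 / 1600 : ℝ) = (1 / 40) ^ 2 by norm_num, Real.sqrt_sq (by norm_num)]]
    exact Real.sqrt_lt_sqrt hε0.le hε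
  have h2nB : 2 * nB ≤ n ^ 2 := by omega
  have hTreal : (T.card : ℝ) * ((n : ℝ) ^ 2 - 2 * (nB : ℝ)) ≤ (n : ℝ) * (nB : ℝ) := by
    have hc := (Nat.cast_le (α := ℝ)).mpr hTbound
    rw [Nat.cast_mul, Nat.cast_sub h2nB, Nat.cast_mul] at hc
    push_cast at hc ⊢
    linarith
  have hTlt : (T.card : ℝ) < Real.sqrt ε * (n : ℝ) := by
    apply statement14_aux (Real.sqrt ε) (n : ℝ) (T.card : ℝ) (nB : ℝ) hs0 hs40 hNcast
      (Nat.cast_nonneg _) (Nat.cast_nonneg _) (by rw [hs2]; exact hBbound) hTreal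
  -- conclusion
  refine ⟨↑(univ.filter fun x => f x = ψ x), ?_, MonoidHom.mk' f hmul, ?_⟩
  · rw [Set.ncard_coe_finset]
    have hcards : (univ.filter fun x => f x = ψ x).card + T.card = n := by
      rw [hT, Finset.card_filter_add_card_filter_not, card_univ, hnF]
    have : ((univ.filter fun x => f x = ψ x).card : ℝ) = (n : ℝ) - (T.card : ℝ) := by
      have := (Nat.cast_inj (R := ℝ)).mpr hcards
      push_cast at this
      linarith
    rw [this]
    nlinarith [hTlt]
  · intro x hx
    simp only [Finset.coe_filter, Set.mem_setOf_eq, mem_univ, true_and] at hx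
    exact hx
end

section
/- Let V denote the set of 2×2 integer matrices of trace 0. Let q be a positive integer and let v, w ∈ V be primitive (the gcd of the four entries of v is 1, and likewise for w). Suppose that for every prime p dividing q, the reductions of v and w mod p are linearly independent over 𝔽_p. Then for every Z ∈ V there exist X, Y ∈ V such that [v,X] + [w,Y] ≡ 2Z (mod q), where [a,b] = ab − ba and the congruence is entrywise. -/
/-!
Writing a traceless matrix as `tracelessMatrix x = !![x 0, x 1; x 2, -x 0]`, the commutator of two
such matrices is the cross product of their coordinate vectors, laid out with doubled off-diagonal
entries (`commutator_tracelessMatrix`); this doubling is why only `2 • Z` can be reached. So it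
suffices to solve `v ⨯₃ X + w ⨯₃ Y ≡ t (mod q)` in `ℤ³`. Modulo a prime `p` this is possible: over a
field, a nonzero linear form `x ⬝ᵥ ·` vanishing on all `v ⨯₃ X + w ⨯₃ Y` would satisfy
`x ⨯₃ v = x ⨯₃ w = 0`, making `v` and `w` both multiples of `x`. Solvability modulo `r` and modulo
`s` gives solvability modulo `r * s` (solve again for the error term and scale by `r`), so the prime
case yields the case of every `q > 0`.
-/

open Matrix

namespace LinearMap

variable {R M N : Type*} [CommSemiring R] [AddCommMonoid M] [Module R M]
  [AddCommMonoid N] [Module R N]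

def SurjectiveMod (f : M →ₗ[R] N) (r : R) : Prop :=
  ∀ y, ∃ x z, y = f x + r • z

theorem surjectiveMod_one (f : M →ₗ[R] N) : f.SurjectiveMod 1 :=
  fun y => ⟨0, y, by rw [map_zero, one_smul, zero_add]⟩

theorem SurjectiveMod.mul {f : M →ₗ[R] N} {r s : R} (hr : f.SurjectiveMod r)
    (hs : f.SurjectiveMod s) : f.SurjectiveMod (r * s) := by
  intro y
  obtain ⟨x₁, z₁, rfl⟩ := hr y
  obtain ⟨x₂, z₂, rfl⟩ := hs z₁
  exact ⟨x₁ + r • x₂, z₂, by rw [map_add, map_smul, smul_add, mul_smul, add_assoc]⟩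

theorem surjectiveMod_natCast_of_forall_prime_dvd {M N : Type*} [AddCommGroup M]
    [AddCommGroup N] {f : M →ₗ[ℤ] N} {q : ℕ} (hq : q ≠ 0)
    (h : ∀ p : ℕ, p.Prime → p ∣ q → f.SurjectiveMod (p : ℤ)) :
    f.SurjectiveMod (q : ℤ) := by
  suffices ∀ n : ℕ, n ∣ q → f.SurjectiveMod (n : ℤ) from this q dvd_rfl
  intro n
  induction n using Nat.recOnMul with
  | zero => exact fun h0 => absurd (zero_dvd_iff.1 h0) hq
  | one => exact fun _ => Nat.cast_one (R := ℤ) ▸ f.surjectiveMod_one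
  | prime p hp => exact h p hp
  | mul a b ha hb =>
    intro hab
    rw [Nat.cast_mul]
    exact (ha (dvd_of_mul_right_dvd hab)).mul (hb (dvd_of_mul_left_dvd hab))

end LinearMap

section CrossProduct

theorem RingHom.comp_crossProduct {R S : Type*} [CommRing R] [CommRing S] (φ : R →+* S)
    (u v : Fin 3 → R) : φ ∘ (u ⨯₃ v) = (φ ∘ u) ⨯₃ (φ ∘ v) := by
  ext i
  fin_cases i <;> simp [cross_apply]

theorem cross_eq_zero_of_forall_dotProduct_cross_eq_zero {R : Type*} [CommRing R]
    {x v : Fin 3 → R} (h : ∀ X, x ⬝ᵥ v ⨯₃ X = 0) : x ⨯₃ v = 0 :=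
  dotProduct_eq_zero _ fun X => by
    rw [dotProduct_comm, triple_product_permutation, h]

variable {K : Type*} [Field K]

theorem cross_eq_zero_of_cross_eq_zero_of_cross_eq_zero {x v w : Fin 3 → K} (hx : x ≠ 0)
    (hv : x ⨯₃ v = 0) (hw : x ⨯₃ w = 0) : v ⨯₃ w = 0 := by
  have parallel : ∀ {u}, x ⨯₃ u = 0 → ∃ a : K, a • x = u := fun hu => by
    have : ¬LinearIndependent K ![x, _] := fun hi =>
      crossProduct_ne_zero_iff_linearIndependent.2 hi hu
    simpa [LinearIndependent.pair_iff' hx] using this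
  obtain ⟨a, rfl⟩ := parallel hv
  obtain ⟨b, rfl⟩ := parallel hw
  simp [cross_self]

theorem exists_cross_add_cross_eq {v w : Fin 3 → K} (h : LinearIndependent K ![v, w])
    (t : Fin 3 → K) : ∃ X Y, v ⨯₃ X + w ⨯₃ Y = t := by
  by_contra! ht
  let L := LinearMap.range ((crossProduct v).coprod (crossProduct w))
  obtain ⟨f, hft, hfL⟩ := L.exists_dual_map_eq_bot_of_notMem (x := t)
    (by rintro ⟨⟨X, Y⟩, hXY⟩; exact ht X Y hXY) inferInstance
  set x := (dotProductEquiv K (Fin 3)).symm f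
  have hf : ∀ y, f y = x ⬝ᵥ y := fun y => by
    conv_lhs => rw [← (dotProductEquiv K (Fin 3)).apply_symm_apply f]
    rfl
  have hfL' : ∀ X Y, x ⬝ᵥ (v ⨯₃ X + w ⨯₃ Y) = 0 := fun X Y => by
    rw [← hf, ← Submodule.mem_bot K, ← hfL]
    exact Submodule.mem_map_of_mem ⟨(X, Y), rfl⟩
  have hx : x ≠ 0 := by rintro hx; simp [hf, hx] at hft
  have hxv : x ⨯₃ v = 0 :=
    cross_eq_zero_of_forall_dotProduct_cross_eq_zero fun X => by simpa using hfL' X 0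
  have hxw : x ⨯₃ w = 0 :=
    cross_eq_zero_of_forall_dotProduct_cross_eq_zero fun Y => by simpa using hfL' 0 Y
  exact crossProduct_ne_zero_iff_linearIndependent.2 h
    (cross_eq_zero_of_cross_eq_zero_of_cross_eq_zero hx hxv hxw)

end CrossProduct

theorem surjectiveMod_cross_of_linearIndependent {p : ℕ} [Fact p.Prime] {v w : Fin 3 → ℤ}
    (h : LinearIndependent (ZMod p) ![(Int.cast : ℤ → ZMod p) ∘ v, Int.cast ∘ w]) :
    ((crossProduct v).coprod (crossProduct w)).SurjectiveMod (p : ℤ) := by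
  intro t
  obtain ⟨X, Y, hXY⟩ := exists_cross_add_cross_eq h (Int.cast ∘ t)
  let lift : (Fin 3 → ZMod p) → Fin 3 → ℤ := fun X i => (X i).cast
  have hlift : ∀ X, (Int.cast : ℤ → ZMod p) ∘ lift X = X :=
    fun X => funext fun i => ZMod.intCast_zmod_cast (X i)
  have hdvd : ∀ i, (p : ℤ) ∣ (t - (v ⨯₃ lift X + w ⨯₃ lift Y)) i := fun i => by
    have hv := congrFun ((Int.castRingHom (ZMod p)).comp_crossProduct v (lift X)) i
    have hw := congrFun ((Int.castRingHom (ZMod p)).comp_crossProduct w (lift Y)) i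
    have ht := congrFun hXY i
    simp only [Int.coe_castRingHom, hlift, Pi.add_apply, Function.comp_apply] at hv hw ht
    rw [← ZMod.intCast_zmod_eq_zero_iff_dvd, Pi.sub_apply, Pi.add_apply, Int.cast_sub,
      Int.cast_add, hv, hw, ht, sub_self]
  choose z hz using hdvd
  exact ⟨(lift X, lift Y), z, sub_eq_iff_eq_add'.1 (funext hz)⟩

section TracelessMatrix

variable {R : Type*} [CommRing R]

def tracelessMatrix : (Fin 3 → R) →ₗ[R] Matrix (Fin 2) (Fin 2) R where
  toFun x := !![x 0, x 1; x 2, -x 0]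
  map_add' x y := by ext i j; fin_cases i <;> fin_cases j <;> simp [add_comm]
  map_smul' c x := by ext i j; fin_cases i <;> fin_cases j <;> simp

def commutatorMatrix : (Fin 3 → R) →ₗ[R] Matrix (Fin 2) (Fin 2) R where
  toFun s := !![s 0, 2 * s 2; 2 * s 1, -s 0]
  map_add' x y := by ext i j; fin_cases i <;> fin_cases j <;> simp [add_comm, mul_add]
  map_smul' c x := by ext i j; fin_cases i <;> fin_cases j <;> simp [mul_left_comm]

theorem trace_tracelessMatrix (x : Fin 3 → R) : (tracelessMatrix x).trace = 0 := by
  simp [tracelessMatrix, trace_fin_two]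

def tracelessCoords (A : Matrix (Fin 2) (Fin 2) R) : Fin 3 → R :=
  ![A 0 0, A 0 1, A 1 0]

theorem tracelessMatrix_tracelessCoords {A : Matrix (Fin 2) (Fin 2) R} (h : A.trace = 0) :
    tracelessMatrix (tracelessCoords A) = A := by
  rw [trace_fin_two, add_eq_zero_iff_eq_neg'] at h
  ext i j; fin_cases i <;> fin_cases j <;> simp [tracelessMatrix, tracelessCoords, h]

theorem tracelessMatrix_map {S : Type*} [CommRing S] (φ : R →+* S) (x : Fin 3 → R) :
    (tracelessMatrix x).map φ = tracelessMatrix (φ ∘ x) := by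
  ext i j; fin_cases i <;> fin_cases j <;> simp [tracelessMatrix]

theorem linearIndependent_tracelessCoords_map {S : Type*} [CommRing S] (φ : R →+* S)
    {A B : Matrix (Fin 2) (Fin 2) R} (hA : A.trace = 0) (hB : B.trace = 0)
    (h : LinearIndependent S ![A.map φ, B.map φ]) :
    LinearIndependent S ![φ ∘ tracelessCoords A, φ ∘ tracelessCoords B] := by
  refine .of_comp tracelessMatrix ?_
  convert h using 1
  ext k : 1
  fin_cases k <;> simp [← tracelessMatrix_map, tracelessMatrix_tracelessCoords, hA, hB]

theorem commutator_tracelessMatrix (u x : Fin 3 → R) :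
    tracelessMatrix u * tracelessMatrix x - tracelessMatrix x * tracelessMatrix u =
      commutatorMatrix (u ⨯₃ x) := by
  ext i j; fin_cases i <;> fin_cases j <;>
    simp [tracelessMatrix, commutatorMatrix, cross_apply] <;> ring

theorem two_smul_eq_commutatorMatrix {A : Matrix (Fin 2) (Fin 2) R} (h : A.trace = 0) :
    2 • A = commutatorMatrix ![2 * A 0 0, A 1 0, A 0 1] := by
  rw [trace_fin_two, add_eq_zero_iff_eq_neg'] at h
  ext i j; fin_cases i <;> fin_cases j <;> simp [commutatorMatrix, h, two_mul]

end TracelessMatrix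

theorem statement16_general (q : ℕ) (hq : 0 < q) (v w : Matrix (Fin 2) (Fin 2) ℤ)
    (hv : v.trace = 0) (hw : w.trace = 0)
    (hindep : ∀ p : ℕ, p.Prime → p ∣ q →
      LinearIndependent (ZMod p)
        ![v.map (Int.cast : ℤ → ZMod p), w.map (Int.cast : ℤ → ZMod p)]) :
    ∀ Z : Matrix (Fin 2) (Fin 2) ℤ, Z.trace = 0 →
      ∃ X Y : Matrix (Fin 2) (Fin 2) ℤ, X.trace = 0 ∧ Y.trace = 0 ∧
        ∀ i j, (q : ℤ) ∣ ((v * X - X * v) + (w * Y - Y * w) - 2 • Z) i j := by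
  intro Z hZ
  have hsurj : ((crossProduct (tracelessCoords v)).coprod
      (crossProduct (tracelessCoords w))).SurjectiveMod (q : ℤ) := by
    refine LinearMap.surjectiveMod_natCast_of_forall_prime_dvd hq.ne' fun p hp hpq => ?_
    have := Fact.mk hp
    exact surjectiveMod_cross_of_linearIndependent
      (linearIndependent_tracelessCoords_map (Int.castRingHom (ZMod p)) hv hw (hindep p hp hpq))
  obtain ⟨⟨X, Y⟩, z, hz⟩ := hsurj ![2 * Z 0 0, Z 1 0, Z 0 1]
  refine ⟨tracelessMatrix X, tracelessMatrix Y, trace_tracelessMatrix X,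
    trace_tracelessMatrix Y, fun i j => ?_⟩
  have hcomm : v * tracelessMatrix X - tracelessMatrix X * v +
      (w * tracelessMatrix Y - tracelessMatrix Y * w) - 2 • Z =
        -((q : ℤ) • commutatorMatrix z) := by
    rw [← tracelessMatrix_tracelessCoords hv, ← tracelessMatrix_tracelessCoords hw,
      commutator_tracelessMatrix, commutator_tracelessMatrix, two_smul_eq_commutatorMatrix hZ, hz,
      LinearMap.coprod_apply, ← map_add, ← map_sub, ← map_smul, ← map_neg]
    congr 1
    abel
  rw [hcomm, Matrix.neg_apply, Matrix.smul_apply, smul_eq_mul, dvd_neg]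
  exact dvd_mul_right _ _

/-- If `v, w` are primitive traceless integer matrices which are linearly
independent mod every prime dividing `q`, then commutators `[v,·] + [w,·]` hit `2V mod q`. -/
theorem statement16 (q : ℕ) (hq : 0 < q) (v w : Matrix (Fin 2) (Fin 2) ℤ)
    (hv : v.trace = 0) (hw : w.trace = 0)
    (hvprim : Finset.univ.gcd (fun p : Fin 2 × Fin 2 => v p.1 p.2) = 1)
    (hwprim : Finset.univ.gcd (fun p : Fin 2 × Fin 2 => w p.1 p.2) = 1)
    (hindep : ∀ p : ℕ, p.Prime → p ∣ q →
      LinearIndependent (ZMod p)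
        ![v.map (Int.cast : ℤ → ZMod p), w.map (Int.cast : ℤ → ZMod p)]) :
    ∀ Z : Matrix (Fin 2) (Fin 2) ℤ, Z.trace = 0 →
      ∃ X Y : Matrix (Fin 2) (Fin 2) ℤ, X.trace = 0 ∧ Y.trace = 0 ∧
        ∀ i j, (q : ℤ) ∣ ((v * X - X * v) + (w * Y - Y * w) - 2 • Z) i j :=
  statement16_general q hq v w hv hw hindep
end
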